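/- arXiv:cs/0412100 — 3 statements merged into one kernel-verified Lean document; each statement's English description precedes it below -/
import Mathlib

section
/- Let Σ be a finite alphabet and D a dependence on Σ. For all pomsets 𝐱 and 𝐲 over Σ (with representatives having disjoint event sets), the unsequentialization of their weak sequential composition equals the weak sequential composition of their unsequentializations: ⟨𝐱 ⊛_D 𝐲⟩_D = ⟨𝐱⟩_D ⊛_D ⟨𝐲⟩_D. -/
open Classical

/-- A labeled partial order (lposet) over the alphabet `A`: a set of events
(drawn from `ℕ`), a strict order on them, and a labeling function. -/
structure Lposet (A : Type*) where
  E : Set ℕ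
  lt : ℕ → ℕ → Prop
  lab : ℕ → A

namespace Lposet

variable {A : Type*}

/-- `x` is a genuine lposet: finitely many events, the order relates only
events, and it is irreflexive and transitive. -/
def IsLposet (x : Lposet A) : Prop :=
  x.E.Finite ∧
  (∀ e₁ e₂, x.lt e₁ e₂ → e₁ ∈ x.E ∧ e₂ ∈ x.E) ∧
  (∀ e, ¬ x.lt e e) ∧
  (∀ e₁ e₂ e₃, x.lt e₁ e₂ → x.lt e₂ e₃ → x.lt e₁ e₃)

/-- `cl x`: the collection of downward closed subsets of the events of `x`. -/
def cl (x : Lposet A) : Set (Set ℕ) :=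
  {Dw | Dw ⊆ x.E ∧ ∀ e d, x.lt e d → d ∈ Dw → e ∈ Dw}

/-- Isomorphism of lposets: a bijection between the event sets preserving and
reflecting the order and commuting with the labelings.  A pomset is an
isomorphism class of lposets; equality of pomsets is isomorphism of
representatives. -/
def Iso (x y : Lposet A) : Prop :=
  ∃ f : ℕ → ℕ, Set.BijOn f x.E y.E ∧
    (∀ e₁ ∈ x.E, ∀ e₂ ∈ x.E, (x.lt e₁ e₂ ↔ y.lt (f e₁) (f e₂))) ∧
    (∀ e ∈ x.E, x.lab e = y.lab (f e))

/-- The prefix relation `⪅` between pomsets, stated on representatives: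
`Pre x y` iff there are representatives `x'` of `[x]` and `y'` of `[y]` with
`E_{x'} ⊆ E_{y'}`, `cl x' ⊆ cl y'` (and the labels of `y'` extend those of
`x'`). -/
def Pre (x y : Lposet A) : Prop :=
  ∃ x' y', Iso x x' ∧ Iso y y' ∧ x'.E ⊆ y'.E ∧ x'.cl ⊆ y'.cl ∧
    ∀ e ∈ x'.E, x'.lab e = y'.lab e

/-- `x` is less sequential than `y` (`⊑`): there are representatives with the
same events and labels such that the order of the first is contained in the
order of the second. -/
def Seq (x y : Lposet A) : Prop :=
  ∃ x' y', Iso x x' ∧ Iso y y' ∧ x'.E = y'.E ∧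
    (∀ e ∈ x'.E, x'.lab e = y'.lab e) ∧
    ∀ e₁ e₂, x'.lt e₁ e₂ → y'.lt e₁ e₂

/-- Weak sequential composition `x ⊛_D y` of (representatives of) pomsets with
disjoint event sets: the union of the two lposets together with the order
generated additionally by all pairs `(e₁, e₂) ∈ E_x × E_y` whose labels are
`D`-related. -/
noncomputable def comp (D : A → A → Prop) (x y : Lposet A) : Lposet A where
  E := x.E ∪ y.E
  lt := Relation.TransGen (fun e₁ e₂ =>
    x.lt e₁ e₂ ∨ y.lt e₁ e₂ ∨
      (e₁ ∈ x.E ∧ e₂ ∈ y.E ∧ D (x.lab e₁) (y.lab e₂)))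
  lab := fun e => if e ∈ x.E then x.lab e else y.lab e

/-- Unsequentialization `⟨x⟩_D` of a pomset: keep only the order between
`D`-dependent events (and close transitively). -/
def unseq (D : A → A → Prop) (x : Lposet A) : Lposet A where
  E := x.E
  lt := Relation.TransGen (fun e₁ e₂ => x.lt e₁ e₂ ∧ D (x.lab e₁) (x.lab e₂))
  lab := x.lab

/-- `D`-consistency: concurrent (distinct, order-incomparable) events never
carry `D`-dependent labels. -/
def DConsistent (D : A → A → Prop) (x : Lposet A) : Prop :=
  ∀ e₁ ∈ x.E, ∀ e₂ ∈ x.E, e₁ ≠ e₂ → ¬ x.lt e₁ e₂ → ¬ x.lt e₂ e₁ →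
    ¬ D (x.lab e₁) (x.lab e₂)

/-- The totally ordered lposet corresponding to a string. -/
def ofList [Inhabited A] (σ : List A) : Lposet A where
  E := {i | i < σ.length}
  lt := fun i j => i < j ∧ j < σ.length
  lab := fun i => σ.getD i default

/-- The linearizations of a pomset: all strings it is less sequential than. -/
def lin [Inhabited A] (x : Lposet A) : Set (List A) :=
  {σ | Seq x (ofList σ)}

/-- The singleton pomset consisting of one event `e` labeled `a`. -/
def letter (a : A) (e : ℕ) : Lposet A where
  E := {e}
  lt := fun _ _ => False
  lab := fun _ => a

end Lposet

/-- Lemma 1 of the paper.  Let `A` be a finite alphabet and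
`D` a dependence (reflexive and symmetric relation) on `A`.  For all pomsets
`x`, `y` over `A` (given by representatives with disjoint event sets), the
unsequentialization of their weak sequential composition equals (as a pomset,
i.e. up to isomorphism) the weak sequential composition of their
unsequentializations: `⟨x ⊛_D y⟩_D = ⟨x⟩_D ⊛_D ⟨y⟩_D`. -/
theorem unseq_comp {A : Type*} [Finite A] (D : A → A → Prop)
    (hDrefl : ∀ a, D a a) (hDsymm : ∀ a b, D a b → D b a)
    (x y : Lposet A) (hx : x.IsLposet) (hy : y.IsLposet)
    (hdisj : Disjoint x.E y.E) :
    Lposet.Iso (Lposet.unseq D (Lposet.comp D x y))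
      (Lposet.comp D (Lposet.unseq D x) (Lposet.unseq D y)) := by

  classical
  obtain ⟨hxfin, hxdom, hxirr, hxtrans⟩ := hx
  obtain ⟨hyfin, hydom, hyirr, hytrans⟩ := hy
  have hdxy : ∀ e, e ∈ x.E → e ∉ y.E := fun e he => Set.disjoint_left.mp hdisj he
  have hdyx : ∀ e, e ∈ y.E → e ∉ x.E := fun e he => Set.disjoint_right.mp hdisj he
  set B : ℕ → ℕ → Prop := fun e₁ e₂ =>
    x.lt e₁ e₂ ∨ y.lt e₁ e₂ ∨ (e₁ ∈ x.E ∧ e₂ ∈ y.E ∧ D (x.lab e₁) (y.lab e₂)) with hB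
  -- label computation for comp
  have hlabX : ∀ e ∈ x.E, (Lposet.comp D x y).lab e = x.lab e := by
    intro e he; simp [Lposet.comp, he]
  have hlabY : ∀ e ∈ y.E, (Lposet.comp D x y).lab e = y.lab e := by
    intro e he; simp [Lposet.comp, hdyx e he]
  -- Lemma A: chains starting in y.E stay in y.E and are y.lt
  have lemA : ∀ a b, Relation.TransGen B a b → a ∈ y.E → y.lt a b ∧ b ∈ y.E := by
    intro a b h
    induction h with
    | single h =>
      intro ha
      rcases h with h | h | ⟨h1, _, _⟩
      · exact absurd (hxdom _ _ h).1 (hdyx _ ha)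
      · exact ⟨h, (hydom _ _ h).2⟩
      · exact absurd h1 (hdyx _ ha)
    | tail h hstep ih =>
      intro ha
      obtain ⟨hlt, hb⟩ := ih ha
      rcases hstep with h | h | ⟨h1, _, _⟩
      · exact absurd (hxdom _ _ h).1 (hdyx _ hb)
      · exact ⟨hytrans _ _ _ hlt h, (hydom _ _ h).2⟩
      · exact absurd h1 (hdyx _ hb)
  -- Lemma B: chains ending in x.E start in x.E and are x.lt
  have lemB : ∀ a b, Relation.TransGen B a b → b ∈ x.E → x.lt a b ∧ a ∈ x.E := by
    intro a b h
    induction h with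
    | single h =>
      intro hb
      rcases h with h | h | ⟨_, h2, _⟩
      · exact ⟨h, (hxdom _ _ h).1⟩
      · exact absurd (hydom _ _ h).2 (hdxy _ hb)
      · exact absurd h2 (hdxy _ hb)
    | tail h hstep ih =>
      intro hc
      rcases hstep with h2 | h2 | ⟨_, hm, _⟩
      · obtain ⟨hlt1, ha⟩ := ih (hxdom _ _ h2).1
        exact ⟨hxtrans _ _ _ hlt1 h2, ha⟩
      · exact absurd (hydom _ _ h2).2 (hdxy _ hc)
      · exact absurd hm (hdxy _ hc)
  -- membership of endpoints
  have hmem : ∀ a b, Relation.TransGen B a b → a ∈ x.E ∪ y.E ∧ b ∈ x.E ∪ y.E := by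
    intro a b h
    induction h with
    | single h =>
      rcases h with h | h | ⟨h1, h2, _⟩
      · exact ⟨Or.inl (hxdom _ _ h).1, Or.inl (hxdom _ _ h).2⟩
      · exact ⟨Or.inr (hydom _ _ h).1, Or.inr (hydom _ _ h).2⟩
      · exact ⟨Or.inl h1, Or.inr h2⟩
    | tail h hstep ih =>
      refine ⟨ih.1, ?_⟩
      rcases hstep with h | h | ⟨_, h2, _⟩
      · exact Or.inl (hxdom _ _ h).2
      · exact Or.inr (hydom _ _ h).2
      · exact Or.inr h2
  -- the two relations
  set L := (Lposet.unseq D (Lposet.comp D x y)).lt with hL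
  set R := (Lposet.comp D (Lposet.unseq D x) (Lposet.unseq D y)).lt with hR
  have hRtrans : ∀ a b c, R a b → R b c → R a c := by
    intro a b c h1 h2; exact Relation.TransGen.trans h1 h2
  have hLtrans : ∀ a b c, L a b → L b c → L a c := by
    intro a b c h1 h2; exact Relation.TransGen.trans h1 h2
  -- L → R
  have hLR : ∀ a b, L a b → R a b := by
    intro a b h
    induction h with
    | single h =>
      obtain ⟨hlt, hD⟩ := h
      have hlt' : Relation.TransGen B _ _ := hlt
      obtain ⟨ha, hb⟩ := hmem _ _ hlt'
      rcases hb with hb | hb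
      · -- b ∈ x.E
        obtain ⟨hxlt, ha'⟩ := lemB _ _ hlt' hb
        rw [hlabX _ ha', hlabX _ hb] at hD
        exact Relation.TransGen.single (Or.inl (Relation.TransGen.single ⟨hxlt, hD⟩))
      · rcases ha with ha | ha
        · -- cross
          rw [hlabX _ ha, hlabY _ hb] at hD
          exact Relation.TransGen.single (Or.inr (Or.inr ⟨ha, hb, hD⟩))
        · obtain ⟨hylt, hb'⟩ := lemA _ _ hlt' ha
          rw [hlabY _ ha, hlabY _ hb'] at hD
          exact Relation.TransGen.single (Or.inr (Or.inl (Relation.TransGen.single ⟨hylt, hD⟩)))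
    | tail _ hstep ih =>
      refine hRtrans _ _ _ ih ?_
      obtain ⟨hlt, hD⟩ := hstep
      have hlt' : Relation.TransGen B _ _ := hlt
      obtain ⟨ha, hb⟩ := hmem _ _ hlt'
      rcases hb with hb | hb
      · obtain ⟨hxlt, ha'⟩ := lemB _ _ hlt' hb
        rw [hlabX _ ha', hlabX _ hb] at hD
        exact Relation.TransGen.single (Or.inl (Relation.TransGen.single ⟨hxlt, hD⟩))
      · rcases ha with ha | ha
        · rw [hlabX _ ha, hlabY _ hb] at hD
          exact Relation.TransGen.single (Or.inr (Or.inr ⟨ha, hb, hD⟩))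
        · obtain ⟨hylt, hb'⟩ := lemA _ _ hlt' ha
          rw [hlabY _ ha, hlabY _ hb'] at hD
          exact Relation.TransGen.single (Or.inr (Or.inl (Relation.TransGen.single ⟨hylt, hD⟩)))
  -- helper: unseq x chains lift to L
  have hux : ∀ a b, (Lposet.unseq D x).lt a b → L a b := by
    intro a b h
    induction h with
    | single h =>
      obtain ⟨hlt, hD⟩ := h
      have ha := (hxdom _ _ hlt).1
      have hb := (hxdom _ _ hlt).2
      refine Relation.TransGen.single ⟨Relation.TransGen.single (Or.inl hlt), ?_⟩
      rw [hlabX _ ha, hlabX _ hb]; exact hD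
    | tail _ hstep ih =>
      obtain ⟨hlt, hD⟩ := hstep
      have hb := (hxdom _ _ hlt).1
      have hc := (hxdom _ _ hlt).2
      refine hLtrans _ _ _ ih (Relation.TransGen.single ⟨Relation.TransGen.single (Or.inl hlt), ?_⟩)
      rw [hlabX _ hb, hlabX _ hc]; exact hD
  have huy : ∀ a b, (Lposet.unseq D y).lt a b → L a b := by
    intro a b h
    induction h with
    | single h =>
      obtain ⟨hlt, hD⟩ := h
      have ha := (hydom _ _ hlt).1
      have hb := (hydom _ _ hlt).2
      refine Relation.TransGen.single ⟨Relation.TransGen.single (Or.inr (Or.inl hlt)), ?_⟩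
      rw [hlabY _ ha, hlabY _ hb]; exact hD
    | tail _ hstep ih =>
      obtain ⟨hlt, hD⟩ := hstep
      have hb := (hydom _ _ hlt).1
      have hc := (hydom _ _ hlt).2
      refine hLtrans _ _ _ ih
        (Relation.TransGen.single ⟨Relation.TransGen.single (Or.inr (Or.inl hlt)), ?_⟩)
      rw [hlabY _ hb, hlabY _ hc]; exact hD
  -- R → L
  have hRL : ∀ a b, R a b → L a b := by
    intro a b h
    induction h with
    | single h =>
      rcases h with h | h | ⟨h1, h2, h3⟩
      · exact hux _ _ h
      · exact huy _ _ h
      · refine Relation.TransGen.single ⟨Relation.TransGen.single (Or.inr (Or.inr ⟨h1, h2, h3⟩)), ?_⟩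
        rw [hlabX _ h1, hlabY _ h2]; exact h3
    | tail _ hstep ih =>
      refine hLtrans _ _ _ ih ?_
      rcases hstep with h | h | ⟨h1, h2, h3⟩
      · exact hux _ _ h
      · exact huy _ _ h
      · refine Relation.TransGen.single ⟨Relation.TransGen.single (Or.inr (Or.inr ⟨h1, h2, h3⟩)), ?_⟩
        rw [hlabX _ h1, hlabY _ h2]; exact h3
  -- assemble the isomorphism via the identity
  refine ⟨id, ?_, ?_, ?_⟩
  · have : (Lposet.unseq D (Lposet.comp D x y)).E
        = (Lposet.comp D (Lposet.unseq D x) (Lposet.unseq D y)).E := rfl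
    rw [this]; exact Set.bijOn_id _
  · intro e₁ _ e₂ _
    exact ⟨hLR _ _, hRL _ _⟩
  · intro e _
    rfl
end

section
/- Let Σ be a finite alphabet. The relation ⊑ (less sequential than) is a partial order on Pomset(Σ): it is reflexive, transitive, and antisymmetric (if 𝐱 ⊑ 𝐲 and 𝐲 ⊑ 𝐱 then 𝐱 = 𝐲 as pomsets, i.e., the underlying lposets are isomorphic). -/
open Classical

section SeqPOAux

namespace Lposet

variable {A : Type*}

theorem seqPO_iso_refl (x : Lposet A) : Iso x x :=
  ⟨id, Set.bijOn_id _, fun _ _ _ _ => Iff.rfl, fun _ _ => rfl⟩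

theorem seqPO_iso_trans {x y z : Lposet A} (h₁ : Iso x y) (h₂ : Iso y z) : Iso x z := by
  obtain ⟨f, hf, hlt, hlab⟩ := h₁
  obtain ⟨g, hg, hlt', hlab'⟩ := h₂
  refine ⟨g ∘ f, hg.comp hf, ?_, ?_⟩
  · intro e₁ h₁ e₂ h₂
    exact (hlt e₁ h₁ e₂ h₂).trans (hlt' _ (hf.mapsTo h₁) _ (hf.mapsTo h₂))
  · intro e he
    exact (hlab e he).trans (hlab' _ (hf.mapsTo he))

theorem seqPO_iso_symm {x y : Lposet A} (h : Iso x y) : Iso y x := by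
  obtain ⟨f, hf, hlt, hlab⟩ := h
  set g := Function.invFunOn f x.E with hgdef
  have hinv : Set.InvOn g f x.E y.E := hf.invOn_invFunOn
  have hg : Set.BijOn g y.E x.E := hf.symm hinv.symm
  refine ⟨g, hg, ?_, ?_⟩
  · intro e₁ h₁ e₂ h₂
    have k₁ := hinv.2 h₁
    have k₂ := hinv.2 h₂
    have := hlt (g e₁) (hg.mapsTo h₁) (g e₂) (hg.mapsTo h₂)
    rw [k₁, k₂] at this
    exact this.symm
  · intro e he
    have := hlab (g e) (hg.mapsTo he)
    rw [hinv.2 he] at this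
    exact this.symm

/-- The set of ordered pairs of events of `w`. -/
def seqPO_R (w : Lposet A) : Set (ℕ × ℕ) :=
  {p | p.1 ∈ w.E ∧ p.2 ∈ w.E ∧ w.lt p.1 p.2}

theorem seqPO_R_finite {w : Lposet A} (h : w.E.Finite) : (seqPO_R w).Finite :=
  (h.prod h).subset (fun p hp => ⟨hp.1, hp.2.1⟩)

theorem seqPO_R_image {w w' : Lposet A} {f : ℕ → ℕ}
    (hf : Set.BijOn f w.E w'.E)
    (hlt : ∀ e₁ ∈ w.E, ∀ e₂ ∈ w.E, (w.lt e₁ e₂ ↔ w'.lt (f e₁) (f e₂))) :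
    seqPO_R w' = (fun p : ℕ × ℕ => (f p.1, f p.2)) '' seqPO_R w := by
  ext ⟨u, v⟩
  constructor
  · rintro ⟨h1, h2, h3⟩
    obtain ⟨a, ha, rfl⟩ := hf.surjOn h1
    obtain ⟨b, hb, rfl⟩ := hf.surjOn h2
    exact ⟨(a, b), ⟨ha, hb, (hlt a ha b hb).mpr h3⟩, rfl⟩
  · rintro ⟨⟨a, b⟩, ⟨ha, hb, hab⟩, heq⟩
    simp only [Prod.mk.injEq] at heq
    obtain ⟨rfl, rfl⟩ := heq
    exact ⟨hf.mapsTo ha, hf.mapsTo hb, (hlt a ha b hb).mp hab⟩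

theorem seqPO_R_ncard {w w' : Lposet A} (h : Iso w w') :
    (seqPO_R w').ncard = (seqPO_R w).ncard := by
  obtain ⟨f, hf, hlt, _⟩ := h
  rw [seqPO_R_image hf hlt]
  apply Set.ncard_image_of_injOn
  rintro ⟨a, b⟩ ⟨ha, hb, _⟩ ⟨c, d⟩ ⟨hc, hd, _⟩ hpq
  simp only [Prod.mk.injEq] at hpq
  exact Prod.ext (hf.injOn ha hc hpq.1) (hf.injOn hb hd hpq.2)

end Lposet

end SeqPOAux

/-- Let `A` be a finite alphabet.  The relation `⊑`
("less sequential than") is a partial order on `Pomset(A)`: it is reflexive,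
transitive, and antisymmetric, where equality of pomsets means isomorphism of
the underlying lposets. -/
theorem seq_is_partialOrder {A : Type*} [Finite A] :
    (∀ x : Lposet A, x.IsLposet → Lposet.Seq x x) ∧
    (∀ x y z : Lposet A, x.IsLposet → y.IsLposet → z.IsLposet →
      Lposet.Seq x y → Lposet.Seq y z → Lposet.Seq x z) ∧
    (∀ x y : Lposet A, x.IsLposet → y.IsLposet →
      Lposet.Seq x y → Lposet.Seq y x → Lposet.Iso x y) := by
  refine ⟨?_, ?_, ?_⟩
  · -- reflexivity
    intro x _
    exact ⟨x, x, Lposet.seqPO_iso_refl x, Lposet.seqPO_iso_refl x, rfl,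
      fun _ _ => rfl, fun _ _ h => h⟩
  · -- transitivity
    intro x y z _ _ _ hxy hyz
    obtain ⟨x₁, y₁, ixx, iyy, hE, hlab, hlt⟩ := hxy
    obtain ⟨y₂, z₂, iyy', izz, hE', hlab', hlt'⟩ := hyz
    obtain ⟨f, hf, hflt, hflab⟩ :=
      Lposet.seqPO_iso_trans (Lposet.seqPO_iso_symm iyy) iyy'
    -- push x₁ forward along f
    set x₂ : Lposet A :=
      ⟨y₂.E, fun a b => ∃ e₁ ∈ x₁.E, ∃ e₂ ∈ x₁.E, f e₁ = a ∧ f e₂ = b ∧ x₁.lt e₁ e₂,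
        y₂.lab⟩ with hx₂
    have hEx : x₁.E = y₁.E := hE
    have isox : Lposet.Iso x₁ x₂ := by
      refine ⟨f, ?_, ?_, ?_⟩
      · rw [show x₂.E = y₂.E from rfl, hEx]; exact hf
      · intro e₁ h₁ e₂ h₂
        constructor
        · intro h; exact ⟨e₁, h₁, e₂, h₂, rfl, rfl, h⟩
        · rintro ⟨d₁, hd₁, d₂, hd₂, k₁, k₂, hd⟩
          have i₁ : d₁ = e₁ := hf.injOn (hEx ▸ hd₁) (hEx ▸ h₁) k₁
          have i₂ : d₂ = e₂ := hf.injOn (hEx ▸ hd₂) (hEx ▸ h₂) k₂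
          rw [← i₁, ← i₂]; exact hd
      · intro e he
        exact (hlab e he).trans (hflab e (hEx ▸ he))
    refine ⟨x₂, z₂, Lposet.seqPO_iso_trans ixx isox, izz, hE', ?_, ?_⟩
    · intro e he
      exact hlab' e he
    · rintro a b ⟨e₁, h₁, e₂, h₂, rfl, rfl, h⟩
      exact hlt' _ _ ((hflt e₁ (hEx ▸ h₁) e₂ (hEx ▸ h₂)).mp (hlt e₁ e₂ h))
  · -- antisymmetry
    intro x y hx hy hxy hyx
    obtain ⟨x₁, y₁, ixx, iyy, hE, hlab, hlt⟩ := hxy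
    obtain ⟨y₂, x₂, iyy', ixx', hE', _, hlt'⟩ := hyx
    -- finiteness of event sets of representatives
    have finE : ∀ (w w' : Lposet A), w.E.Finite → Lposet.Iso w w' → w'.E.Finite := by
      rintro w w' hw ⟨f, hf, -, -⟩
      rw [← hf.image_eq]; exact hw.image f
    have fy₁ : (Lposet.seqPO_R y₁).Finite := Lposet.seqPO_R_finite (finE y y₁ hy.1 iyy)
    have fx₂ : (Lposet.seqPO_R x₂).Finite := Lposet.seqPO_R_finite (finE x x₂ hx.1 ixx')
    have sub1 : Lposet.seqPO_R x₁ ⊆ Lposet.seqPO_R y₁ := by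
      rintro ⟨a, b⟩ ⟨ha, hb, hab⟩
      exact ⟨hE ▸ ha, hE ▸ hb, hlt a b hab⟩
    have sub2 : Lposet.seqPO_R y₂ ⊆ Lposet.seqPO_R x₂ := by
      rintro ⟨a, b⟩ ⟨ha, hb, hab⟩
      exact ⟨hE' ▸ ha, hE' ▸ hb, hlt' a b hab⟩
    have c1 : (Lposet.seqPO_R x₁).ncard = (Lposet.seqPO_R x).ncard := Lposet.seqPO_R_ncard ixx
    have c2 : (Lposet.seqPO_R y₁).ncard = (Lposet.seqPO_R y).ncard := Lposet.seqPO_R_ncard iyy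
    have c3 : (Lposet.seqPO_R y₂).ncard = (Lposet.seqPO_R y).ncard := Lposet.seqPO_R_ncard iyy'
    have c4 : (Lposet.seqPO_R x₂).ncard = (Lposet.seqPO_R x).ncard := Lposet.seqPO_R_ncard ixx'
    have le1 : (Lposet.seqPO_R x₁).ncard ≤ (Lposet.seqPO_R y₁).ncard :=
      Set.ncard_le_ncard sub1 fy₁
    have le2 : (Lposet.seqPO_R y₂).ncard ≤ (Lposet.seqPO_R x₂).ncard :=
      Set.ncard_le_ncard sub2 fx₂
    have key : (Lposet.seqPO_R y₁).ncard ≤ (Lposet.seqPO_R x₁).ncard := by omega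
    have hReq : Lposet.seqPO_R x₁ = Lposet.seqPO_R y₁ :=
      Set.eq_of_subset_of_ncard_le sub1 key fy₁
    have isomid : Lposet.Iso x₁ y₁ := by
      refine ⟨id, hE ▸ Set.bijOn_id _, ?_, ?_⟩
      · intro e₁ h₁ e₂ h₂
        constructor
        · intro h; exact hlt e₁ e₂ h
        · intro h
          have : (e₁, e₂) ∈ Lposet.seqPO_R y₁ := ⟨hE ▸ h₁, hE ▸ h₂, h⟩
          rw [← hReq] at this
          exact this.2.2
      · intro e he; exact hlab e he
    exact Lposet.seqPO_iso_trans ixx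
      (Lposet.seqPO_iso_trans isomid (Lposet.seqPO_iso_symm iyy))
end

section
/- Let Σ be a finite alphabet and D a dependence on Σ. If pomsets 𝐱 and 𝐲 over Σ are both D-consistent, then their weak sequential composition 𝐱 ⊛_D 𝐲 is D-consistent. -/
open Classical

/-- Let `A` be a finite alphabet and `D` a dependence
(reflexive, symmetric relation) on `A`.  If pomsets `x` and `y` over `A`
(given by representatives with disjoint event sets) are both `D`-consistent,
then their weak sequential composition `x ⊛_D y` is `D`-consistent. -/
theorem comp_dConsistent {A : Type*} [Finite A] (D : A → A → Prop)
    (hDrefl : ∀ a, D a a) (hDsymm : ∀ a b, D a b → D b a)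
    (x y : Lposet A) (hx : x.IsLposet) (hy : y.IsLposet)
    (hdisj : Disjoint x.E y.E)
    (hcx : Lposet.DConsistent D x) (hcy : Lposet.DConsistent D y) :
    Lposet.DConsistent D (Lposet.comp D x y) := by
  intro e₁ he₁ e₂ he₂ hne h12 h21 hD
  simp only [Lposet.comp, Set.mem_union] at he₁ he₂
  have step : ∀ a b, (x.lt a b ∨ y.lt a b ∨ (a ∈ x.E ∧ b ∈ y.E ∧ D (x.lab a) (y.lab b))) →
      (Lposet.comp D x y).lt a b := fun a b h => Relation.TransGen.single h
  have hdj : ∀ e, e ∈ y.E → e ∉ x.E := fun e hy' hx' => Set.disjoint_left.mp hdisj hx' hy'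
  rcases he₁ with h1 | h1 <;> rcases he₂ with h2 | h2
  · have l1 : (Lposet.comp D x y).lab e₁ = x.lab e₁ := if_pos h1
    have l2 : (Lposet.comp D x y).lab e₂ = x.lab e₂ := if_pos h2
    rw [l1, l2] at hD
    exact hcx e₁ h1 e₂ h2 hne (fun h => h12 (step _ _ (Or.inl h)))
      (fun h => h21 (step _ _ (Or.inl h))) hD
  · have l1 : (Lposet.comp D x y).lab e₁ = x.lab e₁ := if_pos h1
    have l2 : (Lposet.comp D x y).lab e₂ = y.lab e₂ := if_neg (hdj _ h2)
    rw [l1, l2] at hD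
    exact h12 (step _ _ (Or.inr (Or.inr ⟨h1, h2, hD⟩)))
  · have l1 : (Lposet.comp D x y).lab e₁ = y.lab e₁ := if_neg (hdj _ h1)
    have l2 : (Lposet.comp D x y).lab e₂ = x.lab e₂ := if_pos h2
    rw [l1, l2] at hD
    exact h21 (step _ _ (Or.inr (Or.inr ⟨h2, h1, hDsymm _ _ hD⟩)))
  · have l1 : (Lposet.comp D x y).lab e₁ = y.lab e₁ := if_neg (hdj _ h1)
    have l2 : (Lposet.comp D x y).lab e₂ = y.lab e₂ := if_neg (hdj _ h2)
    rw [l1, l2] at hD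
    exact hcy e₁ h1 e₂ h2 hne (fun h => h12 (step _ _ (Or.inr (Or.inl h))))
      (fun h => h21 (step _ _ (Or.inr (Or.inl h)))) hD
end
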